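/- Let f be holomorphic and injective on an open set U ⊆ ℂ and z ∈ U. Then the function ζ ↦ f'(z)f'(ζ)/(f(ζ) − f(z))² − 1/(ζ − z)², defined for ζ ∈ U \ {z}, extends holomorphically across ζ = z, and its value at ζ = z equals Sf(z)/6, where Sf = f'''/f' − (3/2)(f''/f')². -/

import Mathlib

/-!
Write `g = dslope f z`, so that `f ζ - f z = (ζ - z) g ζ`; the kernel is `h ζ / ((ζ - z)² g ζ²)`
with `h = f'(z) f' - g²`. Injectivity makes `g` vanish nowhere on `U` (at `z` because an injective
holomorphic map has `f'(z) ≠ 0`). The Taylor coefficients `g⁽ᵏ⁾(z) = f⁽ᵏ⁺¹⁾(z) / (k + 1)` show that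
`h` vanishes to second order at `z`, with `h''(z) = f'(z) f'''(z) / 3 - f''(z)² / 2`, so
`h / (ζ - z)²` is holomorphic on `U` with value `h''(z) / 2` at `z`.
-/

open Set Filter Topology Nat

namespace Complex

theorem not_injOn_pow_of_mem_nhds_zero {t : Set ℂ} (ht : t ∈ 𝓝 0) {n : ℕ} (hn : 2 ≤ n) :
    ¬ InjOn (· ^ n) t := by
  intro hinj
  obtain ⟨ε, hε, hball⟩ := Metric.mem_nhds_iff.mp ht
  have hω := isPrimitiveRoot_exp n (by omega)
  set ω := exp (2 * Real.pi * I / n)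
  set u : ℂ := ((ε / 2 : ℝ) : ℂ)
  have hu : ‖u‖ = ε / 2 := by simp [u, abs_of_pos hε]
  have hu0 : u ≠ 0 := by simp [u, hε.ne']
  have hu_mem : u ∈ t := hball (by simp [hu, hε])
  have huω_mem : u * ω ∈ t := hball (by simp [hu, hω.norm'_eq_one (by omega), hε])
  have h := hinj hu_mem huω_mem (by simp [mul_pow, hω.pow_eq_one])
  exact hω.ne_one (by omega) (mul_left_cancel₀ hu0 (h.symm.trans (mul_one u).symm))

theorem exists_analyticAt_pow_eq {g : ℂ → ℂ} {z : ℂ} (hg : AnalyticAt ℂ g z) (hgz : g z ≠ 0)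
    {n : ℕ} (hn : n ≠ 0) : ∃ ρ : ℂ → ℂ, AnalyticAt ℂ ρ z ∧ ∀ ζ, ρ ζ ^ n = g ζ := by
  obtain ⟨c, hc⟩ := IsAlgClosed.exists_pow_nat_eq (g z) (Nat.pos_of_ne_zero hn)
  refine ⟨fun ζ => c * (g ζ / g z) ^ (n⁻¹ : ℂ), ?_, fun ζ => ?_⟩
  · exact analyticAt_const.mul ((hg.div analyticAt_const hgz).cpow analyticAt_const
      (by simp [hgz]))
  · rw [mul_pow, cpow_nat_inv_pow _ hn, hc, mul_div_cancel₀ _ hgz]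

end Complex

theorem Set.InjOn.not_eventually_eq {X Y : Type*} [TopologicalSpace X] {f : X → Y} {s : Set X}
    {x : X} [(𝓝[≠] x).NeBot] (hf : InjOn f s) (hs : s ∈ 𝓝 x) :
    ¬ ∀ᶠ y in 𝓝 x, f y = f x := by
  intro h
  obtain ⟨y, ⟨hfy, hy⟩, hyx⟩ :=
    ((eventually_nhdsWithin_of_eventually_nhds (h.and hs)).and
      (self_mem_nhdsWithin : {x}ᶜ ∈ 𝓝[≠] x)).exists
  exact hyx (hf hy (mem_of_mem_nhds hs) hfy)

theorem AnalyticAt.exists_eventuallyEq_pow_of_analyticOrderAt_eq {F : ℂ → ℂ} {z : ℂ}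
    (hF : AnalyticAt ℂ F z) {n : ℕ} (hn : n ≠ 0) (horder : analyticOrderAt F z = n) :
    ∃ ψ : ℂ → ℂ, AnalyticAt ℂ ψ z ∧ ψ z = 0 ∧ ∀ᶠ ζ in 𝓝 z, F ζ = ψ ζ ^ n := by
  obtain ⟨g, hg, hgz, hFg⟩ := hF.analyticOrderAt_eq_natCast.mp horder
  obtain ⟨ρ, hρ, hρg⟩ := Complex.exists_analyticAt_pow_eq hg hgz hn
  refine ⟨fun ζ => (ζ - z) * ρ ζ, (analyticAt_id.sub analyticAt_const).mul hρ, by simp, ?_⟩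
  filter_upwards [hFg] with ζ hζ
  rw [hζ, mul_pow, hρg, smul_eq_mul]

/-- Otherwise `f - f z = ψ ^ n` near `z` with `n ≥ 2` and `ψ` an open map at `z`; since `· ^ n` is
not injective near `0`, neither is `f`. -/
theorem AnalyticAt.deriv_ne_zero_of_injOn {f : ℂ → ℂ} {s : Set ℂ} {z : ℂ}
    (hf : AnalyticAt ℂ f z) (hs : s ∈ 𝓝 z) (hinj : InjOn f s) : deriv f z ≠ 0 := by
  intro hf'
  set F : ℂ → ℂ := fun ζ => f ζ - f z
  have hF : AnalyticAt ℂ F z := hf.sub analyticAt_const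
  have hF_ne_top : analyticOrderAt F z ≠ ⊤ := by
    simpa [analyticOrderAt_eq_top, F, sub_eq_zero] using hinj.not_eventually_eq hs
  have hF_two_le : ((2 : ℕ) : ℕ∞) ≤ analyticOrderAt F z := by
    rw [natCast_le_analyticOrderAt_iff_iteratedDeriv_eq_zero hF]
    intro i hi
    interval_cases i <;> simp [F, hf']
  obtain ⟨n, hn⟩ := ENat.ne_top_iff_exists.mp hF_ne_top
  have hn2 : 2 ≤ n := by exact_mod_cast hn ▸ hF_two_le
  obtain ⟨ψ, hψ, hψz, hFψ⟩ :=
    hF.exists_eventuallyEq_pow_of_analyticOrderAt_eq (by omega) hn.symm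
  rcases hψ.eventually_constant_or_nhds_le_map_nhds with hconst | hopen
  · refine hF_ne_top (analyticOrderAt_eq_top.mpr ?_)
    filter_upwards [hFψ, hconst] with ζ h1 h2
    rw [h1, h2, hψz, zero_pow (by omega)]
  · have ht : s ∩ {ζ | F ζ = ψ ζ ^ n} ∈ 𝓝 z := inter_mem hs hFψ
    refine Complex.not_injOn_pow_of_mem_nhds_zero (hψz ▸ hopen (image_mem_map ht)) hn2
      (InjOn.image_of_comp fun a ha b hb hab => hinj ha.1 hb.1 ?_)
    have hFab : F a = F b := by rw [ha.2, hb.2]; exact hab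
    simpa [F] using hFab

section dslope

variable {𝕜 E : Type*} [NontriviallyNormedField 𝕜] [NormedAddCommGroup E] [NormedSpace 𝕜 E]
  {f : 𝕜 → E} {c : 𝕜}

theorem AnalyticAt.analyticAt_dslope (hf : AnalyticAt 𝕜 f c) : AnalyticAt 𝕜 (dslope f c) c :=
  let ⟨_, hp⟩ := hf
  ⟨_, hp.has_fpower_series_dslope_fslope⟩

theorem HasFPowerSeriesAt.iteratedDeriv_eq [CompleteSpace E] {p : FormalMultilinearSeries 𝕜 𝕜 E}
    (hp : HasFPowerSeriesAt f p c) (n : ℕ) : iteratedDeriv n f c = n ! • p.coeff n := by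
  obtain ⟨r, hr⟩ := hp
  rw [iteratedDeriv_eq_iteratedFDeriv, ← hr.factorial_smul 1 n, FormalMultilinearSeries.coeff]
  simp

theorem dslope_dslope_of_ne {ζ : 𝕜} (hζ : ζ ≠ c) :
    dslope (dslope f c) c ζ = ((ζ - c) ^ 2)⁻¹ • (f ζ - f c - (ζ - c) • deriv f c) := by
  have hζc : ζ - c ≠ 0 := sub_ne_zero.mpr hζ
  rw [dslope_of_ne _ hζ, slope_def_module, dslope_of_ne _ hζ, slope_def_module, dslope_same,
    smul_sub, smul_smul, smul_sub (_ : 𝕜)⁻¹, smul_smul, sq, mul_inv, mul_assoc,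
    inv_mul_cancel₀ hζc, mul_one]

variable [CharZero 𝕜] [CompleteSpace E]

theorem AnalyticAt.iteratedDeriv_dslope_self (hf : AnalyticAt 𝕜 f c) (n : ℕ) :
    iteratedDeriv n (dslope f c) c = (n + 1 : 𝕜)⁻¹ • iteratedDeriv (n + 1) f c := by
  obtain ⟨p, hp⟩ := hf
  rw [hp.iteratedDeriv_eq, hp.has_fpower_series_dslope_fslope.iteratedDeriv_eq,
    FormalMultilinearSeries.coeff_fslope, factorial_succ, mul_smul,
    ← Nat.cast_smul_eq_nsmul 𝕜 (n + 1), smul_smul]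
  push_cast
  rw [inv_mul_cancel₀ (by exact_mod_cast n.succ_ne_zero), one_smul]

theorem AnalyticAt.dslope_dslope_self (hf : AnalyticAt 𝕜 f c) :
    dslope (dslope f c) c c = (2 : 𝕜)⁻¹ • iteratedDeriv 2 f c := by
  rw [dslope_same, ← iteratedDeriv_one, hf.iteratedDeriv_dslope_self]
  norm_num

end dslope

/-- The kernel `f'(c) f'(ζ) / (f ζ - f c)² - 1 / (ζ - c)²` with its singularity at `ζ = c` removed:
the double `dslope` divides by `(ζ - c)²`. -/
noncomputable def grunskyKernel {𝕜 : Type*} [NontriviallyNormedField 𝕜] (f : 𝕜 → 𝕜) (c : 𝕜)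
    (ζ : 𝕜) : 𝕜 :=
  dslope (dslope (deriv f c • deriv f - dslope f c * dslope f c) c) c ζ / dslope f c ζ ^ 2

section grunskyKernel

variable {𝕜 : Type*} [NontriviallyNormedField 𝕜] [CharZero 𝕜] [CompleteSpace 𝕜]
  {f : 𝕜 → 𝕜} {c : 𝕜}

theorem AnalyticAt.iteratedDeriv_smul_deriv_sub_dslope_mul_self (hf : AnalyticAt 𝕜 f c) (k : ℕ) :
    iteratedDeriv k (deriv f c • deriv f - dslope f c * dslope f c) c =
      deriv f c * iteratedDeriv (k + 1) f c - ∑ i ∈ Finset.range (k + 1), k.choose i *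
        ((i + 1 : 𝕜)⁻¹ * iteratedDeriv (i + 1) f c) *
        (((k - i : ℕ) + 1 : 𝕜)⁻¹ * iteratedDeriv (k - i + 1) f c) := by
  have hg := hf.analyticAt_dslope
  have hf' : ContDiffAt 𝕜 k (deriv f c • deriv f) c :=
    hf.deriv.contDiffAt.const_smul (deriv f c)
  rw [iteratedDeriv_sub hf' (hg.mul hg).contDiffAt, iteratedDeriv_const_smul_field,
    iteratedDeriv_mul hg.contDiffAt hg.contDiffAt]
  simp only [hf.iteratedDeriv_dslope_self, iteratedDeriv_succ', smul_eq_mul]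

theorem AnalyticAt.grunskyKernel_of_ne (hf : AnalyticAt 𝕜 f c) {ζ : 𝕜} (hζ : ζ ≠ c)
    (hfζ : f ζ ≠ f c) :
    grunskyKernel f c ζ = deriv f c * deriv f ζ / (f ζ - f c) ^ 2 - 1 / (ζ - c) ^ 2 := by
  have hh' : deriv (deriv f c • deriv f - dslope f c * dslope f c) c = 0 := by
    rw [← iteratedDeriv_one, hf.iteratedDeriv_smul_deriv_sub_dslope_mul_self 1]
    simp only [Finset.sum_range_succ, Finset.range_one, Finset.sum_singleton, choose_succ_self_right,
      zero_add, cast_one, CharP.cast_eq_zero, inv_one, iteratedDeriv_one, one_mul, tsub_zero,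
      choose_self, tsub_self]
    ring
  have hζc : ζ - c ≠ 0 := sub_ne_zero.mpr hζ
  have hfζc : f ζ - f c ≠ 0 := sub_ne_zero.mpr hfζ
  simp only [grunskyKernel, dslope_dslope_of_ne hζ, hh', dslope_same, dslope_of_ne _ hζ,
    slope_def_field, Pi.sub_apply, Pi.smul_apply, Pi.mul_apply, smul_eq_mul]
  field_simp
  ring

theorem AnalyticAt.grunskyKernel_self (hf : AnalyticAt 𝕜 f c) :
    grunskyKernel f c c = (deriv (deriv (deriv f)) c / deriv f c
      - (3 / 2) * (deriv (deriv f) c / deriv f c) ^ 2) / 6 := by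
  have hh : AnalyticAt 𝕜 (deriv f c • deriv f - dslope f c * dslope f c) c :=
    hf.deriv.const_smul.sub (hf.analyticAt_dslope.mul hf.analyticAt_dslope)
  rcases eq_or_ne (deriv f c) 0 with hf' | hf'
  · simp [grunskyKernel, hf']
  simp only [grunskyKernel, hh.dslope_dslope_self,
    hf.iteratedDeriv_smul_deriv_sub_dslope_mul_self 2, dslope_same]
  simp only [iteratedDeriv_succ, iteratedDeriv_zero, Finset.sum_range_succ, Finset.range_one,
    Finset.sum_singleton, choose_zero_right, cast_one, CharP.cast_eq_zero, zero_add, inv_one,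
    one_mul, tsub_zero, cast_ofNat, choose_succ_self_right, Nat.add_one_sub_one, choose_self,
    tsub_self, smul_eq_mul]
  field_simp
  ring

end grunskyKernel

theorem Complex.differentiableOn_grunskyKernel {U : Set ℂ} (hU : IsOpen U) {c : ℂ} (hc : c ∈ U)
    {f : ℂ → ℂ} (hf : DifferentiableOn ℂ f U) (hinj : InjOn f U) :
    DifferentiableOn ℂ (grunskyKernel f c) U := by
  have hUc : U ∈ 𝓝 c := hU.mem_nhds hc
  have hf' : deriv f c ≠ 0 := (hf.analyticAt hUc).deriv_ne_zero_of_injOn hUc hinj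
  have hg : DifferentiableOn ℂ (dslope f c) U := (differentiableOn_dslope hUc).2 hf
  refine DifferentiableOn.div ?_ (hg.pow 2) fun ζ hζ => pow_ne_zero 2 ?_
  · exact (differentiableOn_dslope hUc).2 <| (differentiableOn_dslope hUc).2 <|
      ((hf.deriv hU).const_smul _).sub (hg.mul hg)
  · rcases eq_or_ne ζ c with rfl | hζc
    · rwa [dslope_same]
    · rw [dslope_of_ne _ hζc, slope_def_field]
      exact div_ne_zero (sub_ne_zero.mpr (hinj.ne hζ hc hζc)) (sub_ne_zero.mpr hζc)

/-- The squared half-order Grunsky kernel `f'(z)f'(ζ)/(f(ζ)-f(z))² - 1/(ζ-z)²`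
extends holomorphically across `ζ = z` with value `Sf(z)/6`. -/
theorem stmt8 (U : Set ℂ) (hU : IsOpen U) (z : ℂ) (hz : z ∈ U)
    (f : ℂ → ℂ) (hf : DifferentiableOn ℂ f U) (hinj : Set.InjOn f U) :
    ∃ E : ℂ → ℂ, DifferentiableOn ℂ E U ∧
      (∀ ζ ∈ U, ζ ≠ z →
        E ζ = deriv f z * deriv f ζ / (f ζ - f z) ^ 2 - 1 / (ζ - z) ^ 2) ∧
      E z = (deriv (deriv (deriv f)) z / deriv f z
        - (3 / 2) * (deriv (deriv f) z / deriv f z) ^ 2) / 6 := by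
  have hfz : AnalyticAt ℂ f z := hf.analyticAt (hU.mem_nhds hz)
  exact ⟨grunskyKernel f z, Complex.differentiableOn_grunskyKernel hU hz hf hinj,
    fun ζ hζ hζz => hfz.grunskyKernel_of_ne hζz (hinj.ne hζ hz hζz), hfz.grunskyKernel_self⟩
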